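/- arXiv:math/0602632 — 2 statements merged into one kernel-verified Lean document; each statement's English description precedes it below -/
import Mathlib

section
/- Let p be a prime, δ a derivation of an 𝔽_p-algebra R, K := ker δ, and let {x^{[i]} : 0 ≤ i < p^n} be an iterative δ-descent all of whose elements commute with every element of K. Set x_k := x^{[p^k]} for 0 ≤ k ≤ n−1. Then: (1) the K-subalgebra of R generated by the elements x^{[i]} equals ⊕_{i=0}^{p^n−1} K x^{[i]} (a direct sum of K-modules) and is isomorphic as a K-algebra to K[X_0, …, X_{n−1}]/(X_0^p, …, X_{n−1}^p) via X_k ↦ x_k; moreover x^{[i]} = Π_k x_k^{i_k}/i_k! where i = Σ_k i_k p^k is the p-adic expansion of i; (2) if K is a field, then the restriction of δ to this subalgebra is a simple derivation, i.e., the only δ-stable ideals of the subalgebra are 0 and the whole subalgebra. -/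
/-- A derivation of a ring: an additive map satisfying the Leibniz rule. -/
def IsDerivation {R : Type*} [Ring R] (δ : R → R) : Prop :=
  (∀ a b : R, δ (a + b) = δ a + δ b) ∧ (∀ a b : R, δ (a * b) = δ a * b + a * δ b)

/-- An iterative sequence `{x^{[i]} : 0 ≤ i < p^n}` in a ring of characteristic `p`
(where by convention `x^{[k]} := 0` for `k ≥ p^n`). -/
def IsIterativeSeq (p n : ℕ) {R : Type*} [Ring R] (x : ℕ → R) : Prop :=
  (∀ k : ℕ, p ^ n ≤ k → x k = 0) ∧
  ∀ i < p ^ n, ∀ j < p ^ n, x i * x j = ((i + j).choose i : R) * x (i + j)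

/-- An iterative `δ`-descent of exponent `n`. -/
def IsIterativeDescent (p n : ℕ) {R : Type*} [Ring R] (δ : R → R) (x : ℕ → R) : Prop :=
  IsIterativeSeq p n x ∧ x 0 = 1 ∧ ∀ i : ℕ, 1 ≤ i → i < p ^ n → δ (x i) = x (i - 1)


/-!
Applying `δ` to a combination `∑ cⱼ x^{[j]}` with constant coefficients shifts the coefficients
down by one, so `δ^[t]` extracts the top coefficient `c_t`. This gives linear independence over
`K = ker δ` and, when `K` is a field, simplicity: some `δ^[t]` moves a nonzero element of a
`δ`-stable ideal to a nonzero, hence invertible, constant.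

Lucas' theorem gives `x_k ^ j = j! x^{[j p^k]}`, so `x_k ^ p = 0`, and, since adding `p`-adic
digits produces no carry, `∏ₖ x_k ^ {i_k} = (∏ₖ i_k!) x^{[i]}`. Hence the truncated
polynomial ring maps onto `S`, sending the monomials with exponents `< p` to unit multiples of
the basis `x^{[i]}`, and this map is injective by the linear independence.
-/

open Finset
open scoped Nat

namespace Nat

theorem choose_add_pow_mul_modEq_one {p : ℕ} [Fact p.Prime] {k a : ℕ} (b : ℕ)
    (ha : a < p ^ k) :
    (a + p ^ k * b).choose a ≡ 1 [MOD p] := by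
  induction k generalizing a with
  | zero =>
    obtain rfl : a = 0 := by simpa using ha
    simp [Nat.ModEq.refl]
  | succ k ih =>
    have hp : 0 < p := (Fact.out : p.Prime).pos
    have hmod : (a + p ^ (k + 1) * b) % p = a % p := by
      rw [pow_succ', mul_assoc, Nat.add_mul_mod_self_left]
    have hdiv : (a + p ^ (k + 1) * b) / p = a / p + p ^ k * b := by
      rw [pow_succ', mul_assoc, Nat.add_mul_div_left _ _ hp]
    refine Choose.choose_modEq_choose_mod_mul_choose_div_nat.trans ?_
    rw [hmod, hdiv, Nat.choose_self, one_mul]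
    exact ih (Nat.div_lt_of_lt_mul (by rwa [← pow_succ']))

theorem sum_range_mul_pow_lt {p : ℕ} {d : ℕ → ℕ} (hd : ∀ k, d k < p) (m : ℕ) :
    ∑ k ∈ range m, d k * p ^ k < p ^ m := by
  simpa [finFunctionFinEquiv_apply, Fin.sum_univ_eq_sum_range (fun k => d k * p ^ k)] using
    (finFunctionFinEquiv fun k : Fin m => (⟨d k, hd k⟩ : Fin p)).isLt

theorem sum_range_digit_mul_pow {p m i : ℕ} (hi : i < p ^ m) :
    ∑ k ∈ range m, i / p ^ k % p * p ^ k = i := by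
  have h := congrArg Fin.val (finFunctionFinEquiv.apply_symm_apply (⟨i, hi⟩ : Fin (p ^ m)))
  simp only [finFunctionFinEquiv_apply, finFunctionFinEquiv_symm_apply_val] at h
  rwa [Fin.sum_univ_eq_sum_range (fun k => i / p ^ k % p * p ^ k)] at h

end Nat

theorem ZMod.castHom_inv_mul_natCast (A : Type*) [Ring A] {p : ℕ} [Fact p.Prime] [CharP A p]
    {m : ℕ} (hm : ¬ p ∣ m) : ZMod.castHom (dvd_refl p) A ((m : ZMod p)⁻¹) * m = 1 := by
  rw [← map_natCast (ZMod.castHom (dvd_refl p) A) m, ← map_mul,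
    inv_mul_cancel₀ (by rwa [Ne, ZMod.natCast_eq_zero_iff]), map_one]

theorem CharP.exists_natCast_mul_eq_one (A : Type*) [Ring A] {p : ℕ} [Fact p.Prime] [CharP A p]
    {m : ℕ} (hm : ¬ p ∣ m) : ∃ v : ℕ, (v : A) * m = 1 := by
  refine ⟨((m : ZMod p)⁻¹).val, ?_⟩
  rw [← ZMod.cast_eq_val]
  exact ZMod.castHom_inv_mul_natCast A hm

/-- `(m !)⁻¹` computed in `𝔽_p`, mapped to `A`; it is `0` for `m ≥ p`. -/
noncomputable def invFactorial (A : Type*) [Ring A] (p : ℕ) [CharP A p] (m : ℕ) : A :=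
  ZMod.castHom (dvd_refl p) A ((m ! : ZMod p)⁻¹)

theorem invFactorial_mul_factorial {A : Type*} [Ring A] {p : ℕ} [Fact p.Prime] [CharP A p]
    {m : ℕ} (hm : m < p) : invFactorial A p m * (m ! : A) = 1 :=
  ZMod.castHom_inv_mul_natCast A (by rw [(Fact.out : p.Prime).dvd_factorial]; omega)

def digitVec {p n : ℕ} (j : Fin (p ^ n)) : Fin n → ℕ := fun k => j / p ^ (k : ℕ) % p

theorem digitVec_lt {p n : ℕ} [NeZero p] (j : Fin (p ^ n)) (k : Fin n) : digitVec j k < p :=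
  Nat.mod_lt _ (NeZero.pos p)

theorem digitVec_finFunctionFinEquiv {p n : ℕ} (e : Fin n → Fin p) :
    digitVec (finFunctionFinEquiv e) = fun k => (e k : ℕ) := by
  funext k
  rw [digitVec, ← finFunctionFinEquiv_symm_apply_val, Equiv.symm_apply_apply]

theorem not_dvd_prod_factorial_digitVec {p n : ℕ} [hp : Fact p.Prime] (j : Fin (p ^ n)) :
    ¬ p ∣ ∏ k, (digitVec j k)! := by
  rw [Prime.dvd_finsetProd_iff hp.out.prime]
  rintro ⟨k, -, hk⟩
  exact (digitVec_lt j k).not_ge (hp.out.dvd_factorial.mp hk)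

namespace IsIterativeSeq

variable {A : Type*} [Ring A] {p n : ℕ} {x : ℕ → A}

theorem mul_eq_choose_mul (hx : IsIterativeSeq p n x) (i j : ℕ) :
    x i * x j = ((i + j).choose i : A) * x (i + j) := by
  by_cases hij : i < p ^ n ∧ j < p ^ n
  · exact hx.2 i hij.1 j hij.2
  · have hsum : p ^ n ≤ i + j := by omega
    rcases not_and_or.mp hij with h | h <;> simp [hx.1 _ (not_lt.mp h), hx.1 _ hsum]

theorem commute (hx : IsIterativeSeq p n x) (i j : ℕ) : Commute (x i) (x j) := by
  rw [Commute, SemiconjBy, hx.mul_eq_choose_mul, hx.mul_eq_choose_mul, add_comm j,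
    Nat.choose_symm_add]

theorem of_comp {B : Type*} [Ring B] (f : B →+* A) (hf : Function.Injective f) {y : ℕ → B}
    (hy : IsIterativeSeq p n (f ∘ y)) : IsIterativeSeq p n y :=
  ⟨fun k hk => hf (by simpa using hy.1 k hk),
    fun i hi j hj => hf (by simpa using hy.2 i hi j hj)⟩

variable [Fact p.Prime] [CharP A p]

theorem pow_eq_factorial_mul (hx : IsIterativeSeq p n x) (hx0 : x 0 = 1) (k j : ℕ) :
    x (p ^ k) ^ j = (j ! : A) * x (j * p ^ k) := by
  induction j with
  | zero => simp [hx0]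
  | succ j ih =>
    -- Lucas: `(j + 1) p^k` has the digit `j + 1` in position `k`.
    have hC : ((j * p ^ k + p ^ k).choose (j * p ^ k) : A) = (j + 1 : ℕ) := by
      rw [Nat.choose_symm_add, CharP.natCast_eq_natCast A p]
      simpa [mul_add, mul_comm] using
        (Choose.choose_pow_mul_pow_mul_modEq_choose_nat (k := k) (a := j + 1) (b := 1) (p := p))
    rw [pow_succ, ih, mul_assoc, hx.mul_eq_choose_mul, hC, ← mul_assoc, ← Nat.cast_mul,
      Nat.factorial_succ, mul_comm (j + 1), add_one_mul]

theorem pow_prime_eq_zero (hx : IsIterativeSeq p n x) (hx0 : x 0 = 1) (k : ℕ) :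
    x (p ^ k) ^ p = 0 := by
  have hp : (p ! : A) = 0 :=
    (CharP.cast_eq_zero_iff A p _).mpr (Nat.dvd_factorial (Fact.out : p.Prime).pos le_rfl)
  rw [hx.pow_eq_factorial_mul hx0, hp, zero_mul]

theorem list_prod_invFactorial_mul_pow (hx : IsIterativeSeq p n x) (hx0 : x 0 = 1)
    {d : ℕ → ℕ} (hd : ∀ k, d k < p) (m : ℕ) :
    ((List.range m).map fun k => invFactorial A p (d k) * x (p ^ k) ^ d k).prod =
      x (∑ k ∈ range m, d k * p ^ k) := by
  induction m with
  | zero => simp [hx0]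
  | succ m ih =>
    have hcarry : ((∑ k ∈ range m, d k * p ^ k + d m * p ^ m).choose
        (∑ k ∈ range m, d k * p ^ k) : A) = 1 := by
      rw [← Nat.cast_one, CharP.natCast_eq_natCast A p, mul_comm (d m)]
      exact Nat.choose_add_pow_mul_modEq_one _ (Nat.sum_range_mul_pow_lt hd m)
    rw [List.range_succ, List.map_append, List.prod_append, ih, List.map_singleton,
      List.prod_singleton, hx.pow_eq_factorial_mul hx0, ← mul_assoc (invFactorial A p _),
      invFactorial_mul_factorial (hd m), one_mul, hx.mul_eq_choose_mul, hcarry, one_mul,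
      sum_range_succ]

theorem eq_list_prod_digits (hx : IsIterativeSeq p n x) (hx0 : x 0 = 1) {m i : ℕ}
    (hi : i < p ^ m) :
    x i = ((List.range m).map fun k =>
      invFactorial A p (i / p ^ k % p) * x (p ^ k) ^ (i / p ^ k % p)).prod := by
  rw [hx.list_prod_invFactorial_mul_pow hx0 fun k => Nat.mod_lt _ (Fact.out : p.Prime).pos,
    Nat.sum_range_digit_mul_pow hi]

end IsIterativeSeq

section Monomial

variable {M : Type*} [CommMonoid M] {n : ℕ}

def monomialHom (y : Fin n → M) : Multiplicative (Fin n → ℕ) →* M where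
  toFun d := ∏ k, y k ^ d.toAdd k
  map_one' := by simp
  map_mul' d d' := by simp [pow_add, prod_mul_distrib]

theorem monomialHom_apply (y : Fin n → M) (d : Fin n → ℕ) :
    monomialHom y (.ofAdd d) = ∏ k, y k ^ d k :=
  rfl

theorem monomialHom_single (y : Fin n → M) (k : Fin n) :
    monomialHom y (.ofAdd (Pi.single k 1)) = y k := by
  rw [monomialHom_apply, Fintype.prod_eq_single k fun l hl => by simp [Pi.single_eq_of_ne hl]]
  simp

end Monomial

theorem IsIterativeSeq.monomialHom_digitVec {A : Type*} [CommRing A] {p n : ℕ} [Fact p.Prime]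
    [CharP A p] {x : ℕ → A} (hx : IsIterativeSeq p n x) (hx0 : x 0 = 1) (j : Fin (p ^ n)) :
    monomialHom (fun k : Fin n => x (p ^ (k : ℕ))) (.ofAdd (digitVec j)) =
      ((∏ k, (digitVec j k)! : ℕ) : A) * x j := by
  have hinv :
      ((∏ k, (digitVec j k)! : ℕ) : A) * ∏ k, invFactorial A p (digitVec j k) = 1 := by
    rw [Nat.cast_prod, ← prod_mul_distrib]
    exact prod_eq_one fun k _ => by rw [mul_comm, invFactorial_mul_factorial (digitVec_lt j k)]
  have hlist : ∀ f : ℕ → A, ((List.range n).map f).prod = ∏ k : Fin n, f k := fun f => by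
    rw [Fin.prod_univ_eq_prod_range, prod_eq_multiset_prod]
    rfl
  have h : x j = (∏ k, invFactorial A p (digitVec j k)) *
      monomialHom (fun k : Fin n => x (p ^ (k : ℕ))) (.ofAdd (digitVec j)) := by
    rw [hx.eq_list_prod_digits hx0 j.isLt, hlist, prod_mul_distrib]
    rfl
  rw [h, ← mul_assoc, hinv, one_mul]

namespace IsDerivation

variable {R : Type*} [Ring R] {δ : R → R}

theorem map_zero (hδ : IsDerivation δ) : δ 0 = 0 :=
  (AddMonoidHom.mk' δ hδ.1).map_zero

theorem map_one (hδ : IsDerivation δ) : δ 1 = 0 := by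
  simpa using hδ.2 1 1

theorem map_neg (hδ : IsDerivation δ) (a : R) : δ (-a) = -δ a :=
  (AddMonoidHom.mk' δ hδ.1).map_neg a

theorem map_sum (hδ : IsDerivation δ) {ι : Type*} (s : Finset ι) (f : ι → R) :
    δ (∑ i ∈ s, f i) = ∑ i ∈ s, δ (f i) :=
  _root_.map_sum (AddMonoidHom.mk' δ hδ.1) f s

theorem map_mul_of_eq_zero (hδ : IsDerivation δ) {c : R} (hc : δ c = 0) (a : R) :
    δ (c * a) = c * δ a := by
  rw [hδ.2, hc, zero_mul, zero_add]

theorem iterate_map_zero (hδ : IsDerivation δ) (s : ℕ) : δ^[s] 0 = 0 :=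
  Function.iterate_fixed hδ.map_zero s

theorem map_mem_closure (hδ : IsDerivation δ) {s : Set R}
    (hs : ∀ a ∈ s, δ a ∈ Subring.closure s) {a : R} (ha : a ∈ Subring.closure s) :
    δ a ∈ Subring.closure s := by
  induction ha using Subring.closure_induction with
  | mem a ha => exact hs a ha
  | zero => rw [hδ.map_zero]; exact zero_mem _
  | one => rw [hδ.map_one]; exact zero_mem _
  | add a b _ _ ha hb => rw [hδ.1]; exact add_mem ha hb
  | neg a _ ha => rw [hδ.map_neg]; exact neg_mem ha
  | mul a b ha' hb' ha hb => rw [hδ.2]; exact add_mem (mul_mem ha hb') (mul_mem ha' hb)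

end IsDerivation

namespace IsIterativeDescent

variable {R : Type*} [Ring R] {p n : ℕ} {δ : R → R} {x : ℕ → R}

theorem map_sum_range_succ (hx : IsIterativeDescent p n δ x) (hδ : IsDerivation δ)
    {c : ℕ → R} (hc : ∀ j, δ (c j) = 0) {m : ℕ} (hm : m < p ^ n) :
    δ (∑ j ∈ range (m + 1), c j * x j) = ∑ j ∈ range m, c (j + 1) * x j := by
  rw [hδ.map_sum, sum_range_succ', hδ.map_mul_of_eq_zero (hc 0), hx.2.1, hδ.map_one, mul_zero,
    add_zero]
  refine sum_congr rfl fun j hj => ?_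
  rw [hδ.map_mul_of_eq_zero (hc _), hx.2.2 (j + 1) (by omega) (by simp at hj; omega),
    Nat.add_sub_cancel]

theorem iterate_sum_range (hx : IsIterativeDescent p n δ x) (hδ : IsDerivation δ) {s : ℕ}
    {c : ℕ → R} (hc : ∀ j, δ (c j) = 0) {m : ℕ} (hm : m + s ≤ p ^ n) :
    δ^[s] (∑ j ∈ range (m + s), c j * x j) = ∑ j ∈ range m, c (j + s) * x j := by
  induction s generalizing c with
  | zero => rfl
  | succ s ih =>
    rw [← add_assoc, Function.iterate_succ_apply, hx.map_sum_range_succ hδ hc (by omega),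
      ih (fun j => hc (j + 1)) (by omega)]
    simp only [add_assoc]

theorem iterate_sum_range_succ (hx : IsIterativeDescent p n δ x) (hδ : IsDerivation δ)
    {c : ℕ → R} (hc : ∀ j, δ (c j) = 0) {t : ℕ} (ht : t < p ^ n) :
    δ^[t] (∑ j ∈ range (t + 1), c j * x j) = c t := by
  rw [add_comm t, hx.iterate_sum_range hδ hc (by omega)]
  simp [hx.2.1]

theorem coeff_eq_zero_of_sum_eq_zero (hx : IsIterativeDescent p n δ x) (hδ : IsDerivation δ)
    {c : ℕ → R} (hc : ∀ j, δ (c j) = 0) {N : ℕ} (hN : N ≤ p ^ n)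
    (h : ∑ j ∈ range N, c j * x j = 0) : ∀ j < N, c j = 0 := by
  induction N with
  | zero => intro j hj; omega
  | succ N ih =>
    have hcN : c N = 0 := by
      rw [← hx.iterate_sum_range_succ hδ hc hN, h, hδ.iterate_map_zero]
    rw [sum_range_succ, hcN, zero_mul, add_zero] at h
    intro j hj
    rcases Nat.lt_succ_iff_lt_or_eq.mp hj with hj | rfl
    exacts [ih (by omega) h j hj, hcN]

theorem exists_iterate_ne_zero (hx : IsIterativeDescent p n δ x) (hδ : IsDerivation δ)
    {c : ℕ → R} (hc : ∀ j, δ (c j) = 0) {N : ℕ} (hN : N ≤ p ^ n)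
    (h : ∑ j ∈ range N, c j * x j ≠ 0) :
    ∃ t, δ^[t] (∑ j ∈ range N, c j * x j) ≠ 0 ∧
      δ (δ^[t] (∑ j ∈ range N, c j * x j)) = 0 := by
  induction N with
  | zero => simp at h
  | succ N ih =>
    by_cases hcN : c N = 0
    · rw [sum_range_succ, hcN, zero_mul, add_zero] at h ⊢
      exact ih (by omega) h
    · refine ⟨N, ?_⟩
      rw [hx.iterate_sum_range_succ hδ hc hN]
      exact ⟨hcN, hc N⟩

end IsIterativeDescent

theorem sum_fin_mul_eq_sum_range {R : Type*} [Semiring R] {N : ℕ} [NeZero N] (c : Fin N → R)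
    (x : ℕ → R) : ∑ j : Fin N, c j * x j = ∑ j ∈ range N, c (Fin.ofNat N j) * x j := by
  rw [← Fin.sum_univ_eq_sum_range]
  simp only [Fin.ofNat_val_eq_self]

section Span

variable {R : Type*} [Ring R] {p n : ℕ} {x : ℕ → R} {K : Subring R}

theorem IsIterativeSeq.mem_span (hx : IsIterativeSeq p n x) (K : Subring R) (i : ℕ) :
    x i ∈ Submodule.span K (Set.range fun j : Fin (p ^ n) => x j) := by
  by_cases hi : i < p ^ n
  · exact Submodule.subset_span ⟨⟨i, hi⟩, rfl⟩
  · rw [hx.1 i (not_lt.mp hi)]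
    exact zero_mem _

theorem IsIterativeSeq.mul_mem_span (hx : IsIterativeSeq p n x)
    (hcomm : ∀ i < p ^ n, ∀ a ∈ K, x i * a = a * x i) {a b : R}
    (ha : a ∈ Submodule.span K (Set.range fun j : Fin (p ^ n) => x j))
    (hb : b ∈ Submodule.span K (Set.range fun j : Fin (p ^ n) => x j)) :
    a * b ∈ Submodule.span K (Set.range fun j : Fin (p ^ n) => x j) := by
  induction ha using Submodule.span_induction with
  | mem a ha =>
    obtain ⟨i, rfl⟩ := ha
    induction hb using Submodule.span_induction with
    | mem b hb =>
      obtain ⟨j, rfl⟩ := hb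
      have h := Submodule.smul_mem _ (((i + j : ℕ).choose i : ℕ) : K) (hx.mem_span K (i + j))
      rwa [Subring.smul_def, smul_eq_mul, Subring.coe_natCast, ← hx.mul_eq_choose_mul] at h
    | zero => rw [mul_zero]; exact zero_mem _
    | add b b' _ _ hb hb' => rw [mul_add]; exact add_mem hb hb'
    | smul c b _ hb =>
      rw [Subring.smul_def, smul_eq_mul, ← mul_assoc, hcomm i i.isLt c c.2, mul_assoc]
      exact Submodule.smul_mem _ c hb
  | zero => rw [zero_mul]; exact zero_mem _
  | add a a' _ _ ha ha' => rw [add_mul]; exact add_mem ha ha'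
  | smul c a _ ha => rw [smul_mul_assoc]; exact Submodule.smul_mem _ c ha

theorem IsIterativeSeq.mem_closure_iff_mem_span (hx : IsIterativeSeq p n x) (hx0 : x 0 = 1)
    (hcomm : ∀ i < p ^ n, ∀ a ∈ K, x i * a = a * x i) {r : R} :
    r ∈ Subring.closure ((K : Set R) ∪ Set.range fun j : Fin (p ^ n) => x j) ↔
      r ∈ Submodule.span K (Set.range fun j : Fin (p ^ n) => x j) := by
  have h1 := hx.mem_span K 0
  rw [hx0] at h1
  constructor
  · intro hr
    induction hr using Subring.closure_induction with
    | mem a ha =>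
      rcases ha with ha | ha
      · simpa [Subring.smul_def] using Submodule.smul_mem _ (⟨a, ha⟩ : K) h1
      · exact Submodule.subset_span ha
    | zero => exact zero_mem _
    | one => exact h1
    | add _ _ _ _ ha hb => exact add_mem ha hb
    | neg _ _ ha => exact neg_mem ha
    | mul _ _ _ _ ha hb => exact hx.mul_mem_span hcomm ha hb
  · intro hr
    induction hr using Submodule.span_induction with
    | mem a ha => exact Subring.subset_closure (Or.inr ha)
    | zero => exact zero_mem _
    | add _ _ _ _ ha hb => exact add_mem ha hb
    | smul c a _ ha =>
      rw [Subring.smul_def, smul_eq_mul]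
      exact mul_mem (Subring.subset_closure (Or.inl c.2)) ha

theorem IsIterativeSeq.mem_closure_iff_exists_sum (hx : IsIterativeSeq p n x) (hx0 : x 0 = 1)
    (hcomm : ∀ i < p ^ n, ∀ a ∈ K, x i * a = a * x i) {r : R} :
    r ∈ Subring.closure ((K : Set R) ∪ Set.range fun j : Fin (p ^ n) => x j) ↔
      ∃ c : Fin (p ^ n) → R, (∀ j, c j ∈ K) ∧ r = ∑ j, c j * x j := by
  rw [hx.mem_closure_iff_mem_span hx0 hcomm, Submodule.mem_span_range_iff_exists_fun]
  constructor
  · rintro ⟨c, rfl⟩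
    exact ⟨fun j => c j, fun j => (c j).2, by simp [Subring.smul_def]⟩
  · rintro ⟨c, hc, rfl⟩
    exact ⟨fun j => ⟨c j, hc j⟩, by simp [Subring.smul_def]⟩

end Span

namespace IsIterativeDescent

variable {R : Type*} [Ring R] {p n : ℕ} {δ : R → R} {x : ℕ → R} {K : Subring R}

theorem eq_zero_of_sum_eq_zero [NeZero p] (hx : IsIterativeDescent p n δ x) (hδ : IsDerivation δ)
    {c : Fin (p ^ n) → R} (hc : ∀ j, δ (c j) = 0) (h : ∑ j, c j * x j = 0) : c = 0 := by
  funext j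
  rw [sum_fin_mul_eq_sum_range] at h
  simpa using hx.coeff_eq_zero_of_sum_eq_zero hδ (c := fun i => c (Fin.ofNat _ i))
    (fun i => hc _) le_rfl h j j.isLt

theorem exists_iterate_ne_zero_of_mem_closure [NeZero p] (hx : IsIterativeDescent p n δ x)
    (hδ : IsDerivation δ) (hKδ : ∀ a ∈ K, δ a = 0)
    (hcomm : ∀ i < p ^ n, ∀ a ∈ K, x i * a = a * x i) {a : R}
    (ha : a ∈ Subring.closure ((K : Set R) ∪ Set.range fun j : Fin (p ^ n) => x j))
    (ha0 : a ≠ 0) : ∃ t, δ^[t] a ≠ 0 ∧ δ (δ^[t] a) = 0 := by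
  obtain ⟨c, hc, rfl⟩ := (hx.1.mem_closure_iff_exists_sum hx.2.1 hcomm).mp ha
  rw [sum_fin_mul_eq_sum_range] at ha0 ⊢
  exact hx.exists_iterate_ne_zero hδ (fun i => hKδ _ (hc _)) le_rfl ha0

theorem map_mem_closure (hx : IsIterativeDescent p n δ x) (hδ : IsDerivation δ)
    (hKδ : ∀ a ∈ K, δ a = 0) {a : R}
    (ha : a ∈ Subring.closure ((K : Set R) ∪ Set.range fun j : Fin (p ^ n) => x j)) :
    δ a ∈ Subring.closure ((K : Set R) ∪ Set.range fun j : Fin (p ^ n) => x j) := by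
  refine hδ.map_mem_closure ?_ ha
  rintro _ (hb | ⟨j, rfl⟩)
  · rw [hKδ _ hb]
    exact zero_mem _
  · change δ (x j) ∈ _
    rcases Nat.eq_zero_or_pos j with hj | hj
    · rw [hj, hx.2.1, hδ.map_one]
      exact zero_mem _
    · rw [hx.2.2 j hj j.isLt]
      exact Subring.subset_closure (Or.inr ⟨⟨j - 1, by omega⟩, rfl⟩)

theorem eq_bot_or_eq_top [NeZero p] (hx : IsIterativeDescent p n δ x) (hδ : IsDerivation δ)
    (hK : (K : Set R) = {a : R | δ a = 0}) (hKfield : IsField K)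
    (hcomm : ∀ i < p ^ n, ∀ a ∈ K, x i * a = a * x i)
    (I : TwoSidedIdeal (Subring.closure ((K : Set R) ∪ Set.range fun j : Fin (p ^ n) => x j)))
    (hI : ∀ a, a ∈ I → ∀ h : δ (a : R) ∈ Subring.closure ((K : Set R) ∪
      Set.range fun j : Fin (p ^ n) => x j), (⟨δ (a : R), h⟩ : Subring.closure _) ∈ I) :
    I = ⊥ ∨ I = ⊤ := by
  have hKδ : ∀ a, a ∈ K ↔ δ a = 0 := fun a => by rw [← SetLike.mem_coe, hK]; rfl
  rcases eq_or_ne I ⊥ with hI0 | hI0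
  · exact Or.inl hI0
  obtain ⟨a, haI, ha0⟩ : ∃ a ∈ I, a ≠ 0 := by
    by_contra! h
    exact hI0 (TwoSidedIdeal.ext fun a => ⟨fun ha => (TwoSidedIdeal.mem_bot _).mpr (h a ha),
      fun ha => (TwoSidedIdeal.mem_bot _).mp ha ▸ I.zero_mem⟩)
  let δS : Subring.closure ((K : Set R) ∪ Set.range fun j : Fin (p ^ n) => x j) →
      Subring.closure ((K : Set R) ∪ Set.range fun j : Fin (p ^ n) => x j) :=
    fun b => ⟨δ b, hx.map_mem_closure hδ (fun a => (hKδ a).mp) b.2⟩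
  have hδS : ∀ t, (δS^[t] a : R) = δ^[t] a :=
    fun t => Function.Semiconj.iterate_right (f := Subtype.val) (ga := δS) (gb := δ)
      (fun _ => rfl) t a
  have hδSI : ∀ t, δS^[t] a ∈ I := fun t => by
    induction t with
    | zero => exact haI
    | succ t ih => rw [Function.iterate_succ_apply']; exact hI _ ih _
  obtain ⟨t, ht0, htK⟩ := hx.exists_iterate_ne_zero_of_mem_closure hδ (fun a => (hKδ a).mp)
    hcomm a.2 (fun h => ha0 (Subtype.ext h))
  rw [← hδS] at ht0 htK
  have hbK : (δS^[t] a : R) ∈ K := (hKδ _).mpr htK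
  obtain ⟨u, hu⟩ :=
    hKfield.mul_inv_cancel (a := ⟨_, hbK⟩) (fun h => ht0 (congrArg Subtype.val h))
  have h1 : δS^[t] a * ⟨u, Subring.subset_closure (Or.inl u.2)⟩ = 1 :=
    Subtype.ext (by simpa using congrArg Subtype.val hu)
  exact Or.inr ((TwoSidedIdeal.one_mem_iff I).mp (h1 ▸ I.mul_mem_right _ _ (hδSI t)))

end IsIterativeDescent

section TruncatedPolynomial

open AddMonoidAlgebra

variable {A : Type*} [Ring A] {n p : ℕ}

variable (A n p) in
/-- The relations `X_k ^ p = 0` presenting `A[X_0, …, X_{n-1}] / (X_0^p, …, X_{n-1}^p)`, with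
`X_k = single (Pi.single k 1) 1`. -/
abbrev TruncRel (a b : AddMonoidAlgebra A (Fin n → ℕ)) : Prop :=
  ∃ k : Fin n, a = (single (Pi.single k 1) (1 : A)) ^ p ∧ b = 0

theorem TruncRel.mk_single_eq_zero {d : Fin n → ℕ} {k : Fin n} (hk : p ≤ d k) (a : A) :
    RingQuot.mkRingHom (TruncRel A n p) (single d a) = 0 := by
  have hd : d = (d - p • Pi.single k 1) + p • Pi.single k 1 := by
    refine (tsub_add_cancel_of_le fun l => ?_).symm
    by_cases hl : l = k
    · subst hl; simpa
    · simp [Pi.single_eq_of_ne hl]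
  have hsplit : single d a = single (d - p • Pi.single k 1) a * single (Pi.single k 1) 1 ^ p := by
    rw [single_pow, single_mul_single, one_pow, mul_one, ← hd]
  have hX : TruncRel A n p (single (Pi.single k 1) 1 ^ p) 0 := ⟨k, rfl, rfl⟩
  rw [hsplit, map_mul, RingQuot.mkRingHom_rel hX, map_zero, mul_zero]

theorem TruncRel.exists_eq_sum_digitVec (z : RingQuot (TruncRel A n p)) :
    ∃ a : Fin (p ^ n) → A, z = ∑ j, RingQuot.mkRingHom _ (single (digitVec j) (a j)) := by
  obtain ⟨f, rfl⟩ := RingQuot.mkRingHom_surjective _ z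
  induction f using AddMonoidAlgebra.induction_linear with
  | zero => exact ⟨0, by simp⟩
  | add f g hf hg =>
    obtain ⟨a, ha⟩ := hf
    obtain ⟨b, hb⟩ := hg
    exact ⟨a + b, by simp [ha, hb, single_add, sum_add_distrib]⟩
  | single d b =>
    by_cases hd : ∀ k, d k < p
    · refine ⟨Pi.single (finFunctionFinEquiv fun k => ⟨d k, hd k⟩) b, ?_⟩
      rw [Fintype.sum_eq_single (finFunctionFinEquiv fun k => ⟨d k, hd k⟩)
        fun j hj => by simp [Pi.single_eq_of_ne hj], Pi.single_eq_same,
        digitVec_finFunctionFinEquiv]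
    · obtain ⟨k, hk⟩ := not_forall.mp hd
      exact ⟨0, by simp [TruncRel.mk_single_eq_zero (not_lt.mp hk)]⟩

variable {T : Type*} [Ring T]

noncomputable def truncLift (f : A →+* T) (g : Multiplicative (Fin n → ℕ) →* T)
    (hfg : ∀ a d, Commute (f a) (g d)) (hg : ∀ k : Fin n, g (.ofAdd (Pi.single k 1)) ^ p = 0) :
    RingQuot (TruncRel A n p) →+* T :=
  RingQuot.lift ⟨liftNCRingHom f g hfg, by
    rintro _ _ ⟨k, rfl, rfl⟩
    rw [map_pow, map_zero, liftNCRingHom_single, map_one, one_mul, hg]⟩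

theorem truncLift_mk_single (f : A →+* T) (g : Multiplicative (Fin n → ℕ) →* T)
    (hfg : ∀ a d, Commute (f a) (g d)) (hg : ∀ k : Fin n, g (.ofAdd (Pi.single k 1)) ^ p = 0)
    (d : Fin n → ℕ) (a : A) :
    truncLift f g hfg hg (RingQuot.mkRingHom _ (single d a)) = f a * g (.ofAdd d) := by
  rw [truncLift, RingQuot.lift_mkRingHom_apply, liftNCRingHom_single]

end TruncatedPolynomial

section Presentation

open AddMonoidAlgebra
open scoped IsMulCommutative

variable {R : Type*} [Ring R] {p n : ℕ} [Fact p.Prime] [CharP R p] {δ : R → R} {x : ℕ → R}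
  {K : Subring R}

/-- The monomials are evaluated in the commutative subring generated by the `x i`. -/
theorem IsIterativeSeq.exists_truncLift (hx : IsIterativeSeq p n x) (hx0 : x 0 = 1)
    (hcomm : ∀ i < p ^ n, ∀ a ∈ K, x i * a = a * x i) :
    ∃ ψ : RingQuot (TruncRel K n p) →+* R,
      (∀ a : K, ψ (RingQuot.mkRingHom _ (single 0 a)) = a) ∧
      (∀ k : Fin n, ψ (RingQuot.mkRingHom _ (single (Pi.single k 1) 1)) = x (p ^ (k : ℕ))) ∧
      ∀ (j : Fin (p ^ n)) (a : K), ψ (RingQuot.mkRingHom _ (single (digitVec j) a)) =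
        a * ((∏ k, (digitVec j k)! : ℕ) : R) * x j := by
  let C := Subring.closure (Set.range x)
  have : IsMulCommutative C :=
    Subring.isMulCommutative_closure (by rintro _ ⟨i, rfl⟩ _ ⟨j, rfl⟩; exact hx.commute i j)
  let y : ℕ → C := fun i => ⟨x i, Subring.subset_closure ⟨i, rfl⟩⟩
  have hy : IsIterativeSeq p n y := hx.of_comp C.subtype Subtype.val_injective
  have hy0 : y 0 = 1 := Subtype.ext hx0
  have hKC : C ≤ Subring.centralizer K := by
    refine Subring.closure_le.mpr ?_
    rintro _ ⟨i, rfl⟩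
    rw [SetLike.mem_coe, Subring.mem_centralizer_iff]
    intro a ha
    by_cases hi : i < p ^ n
    · exact (hcomm i hi a ha).symm
    · simp [hx.1 i (not_lt.mp hi)]
  let g := C.subtype.toMonoidHom.comp (monomialHom fun k : Fin n => y (p ^ (k : ℕ)))
  have hg : ∀ k : Fin n, g (.ofAdd (Pi.single k 1)) ^ p = 0 := fun k => by
    simpa [g, monomialHom_single] using congrArg Subtype.val (hy.pow_prime_eq_zero hy0 k)
  have hfg : ∀ (a : K) d, Commute (K.subtype a) (g d) := fun a d =>
    Subring.mem_centralizer_iff.mp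
      (hKC (monomialHom (fun k : Fin n => y (p ^ (k : ℕ))) d).2) a a.2
  refine ⟨truncLift K.subtype g hfg hg, fun a => ?_, fun k => ?_, fun j a => ?_⟩
  · rw [truncLift_mk_single, ofAdd_zero, map_one, mul_one]
    rfl
  · rw [truncLift_mk_single, map_one, one_mul]
    simp [g, monomialHom_single, y]
  · rw [truncLift_mk_single, mul_assoc]
    congr 1
    change ((monomialHom (fun k : Fin n => y (p ^ (k : ℕ))) (.ofAdd (digitVec j)) : C) : R) = _
    rw [hy.monomialHom_digitVec hy0 j, Subring.coe_mul, Subring.coe_natCast]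

theorem range_eq_closure_of_map_single {ψ : RingQuot (TruncRel K n p) →+* R}
    (hψ0 : ∀ a : K, ψ (RingQuot.mkRingHom _ (single 0 a)) = a)
    (hψ : ∀ (j : Fin (p ^ n)) (a : K), ψ (RingQuot.mkRingHom _ (single (digitVec j) a)) =
      a * ((∏ k, (digitVec j k)! : ℕ) : R) * x j) :
    ψ.range = Subring.closure ((K : Set R) ∪ Set.range fun j : Fin (p ^ n) => x j) := by
  apply le_antisymm
  · rintro _ ⟨z, rfl⟩
    obtain ⟨a, rfl⟩ := TruncRel.exists_eq_sum_digitVec z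
    rw [map_sum]
    refine sum_mem fun j _ => ?_
    rw [hψ, mul_assoc]
    exact mul_mem (Subring.subset_closure (Or.inl (a j).2))
      (mul_mem (natCast_mem _ _) (Subring.subset_closure (Or.inr ⟨j, rfl⟩)))
  · refine Subring.closure_le.mpr ?_
    rintro _ (ha | ⟨j, rfl⟩)
    · exact ⟨_, hψ0 ⟨_, ha⟩⟩
    · obtain ⟨v, hv⟩ := CharP.exists_natCast_mul_eq_one R (not_dvd_prod_factorial_digitVec j)
      refine ⟨RingQuot.mkRingHom _ (single (digitVec j) (v : K)), ?_⟩
      rw [hψ, Subring.coe_natCast, hv, one_mul]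

theorem IsIterativeDescent.injective_of_map_single (hx : IsIterativeDescent p n δ x)
    (hδ : IsDerivation δ) (hKδ : ∀ a ∈ K, δ a = 0) {ψ : RingQuot (TruncRel K n p) →+* R}
    (hψ : ∀ (j : Fin (p ^ n)) (a : K), ψ (RingQuot.mkRingHom _ (single (digitVec j) a)) =
      a * ((∏ k, (digitVec j k)! : ℕ) : R) * x j) :
    Function.Injective ψ := by
  rw [injective_iff_map_eq_zero]
  intro z hz
  obtain ⟨a, rfl⟩ := TruncRel.exists_eq_sum_digitVec z
  simp only [map_sum, hψ] at hz
  have hc := hx.eq_zero_of_sum_eq_zero hδ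
    (fun j => hKδ _ (mul_mem (a j).2 (natCast_mem K (∏ k, (digitVec j k)!)))) hz
  refine sum_eq_zero fun j _ => ?_
  obtain ⟨v, hv⟩ := CharP.exists_natCast_mul_eq_one R (not_dvd_prod_factorial_digitVec j)
  have ha : (a j : R) = 0 := by
    simpa [mul_assoc, Nat.cast_comm, hv] using congrArg (· * (v : R)) (congrFun hc j)
  rw [show a j = 0 from Subtype.ext ha, single_zero, map_zero]

theorem IsIterativeDescent.exists_ringEquiv (hx : IsIterativeDescent p n δ x)
    (hδ : IsDerivation δ) (hKδ : ∀ a ∈ K, δ a = 0)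
    (hcomm : ∀ i < p ^ n, ∀ a ∈ K, x i * a = a * x i) :
    ∃ e : RingQuot (TruncRel K n p) ≃+*
        Subring.closure ((K : Set R) ∪ Set.range fun j : Fin (p ^ n) => x j),
      (∀ a : K, (e (RingQuot.mkRingHom _ (single 0 a)) : R) = a) ∧
      ∀ k : Fin n,
        (e (RingQuot.mkRingHom _ (single (Pi.single k 1) 1)) : R) = x (p ^ (k : ℕ)) := by
  obtain ⟨ψ, hψ0, hψX, hψ⟩ := hx.1.exists_truncLift hx.2.1 hcomm
  have hinj := hx.injective_of_map_single hδ hKδ hψ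
  exact ⟨(RingEquiv.ofBijective ψ.rangeRestrict ⟨fun a b h => hinj (congrArg Subtype.val h),
    ψ.rangeRestrict_surjective⟩).trans (RingEquiv.subringCongr
      (range_eq_closure_of_map_single hψ0 hψ)), hψ0, hψX⟩

end Presentation

theorem stmt9 {R : Type*} [Ring R] (p : ℕ) (hp : p.Prime) [CharP R p] (n : ℕ)
    (δ : R → R) (hδ : IsDerivation δ)
    (K : Subring R) (hK : (K : Set R) = {a : R | δ a = 0})
    (x : ℕ → R) (hx : IsIterativeDescent p n δ x)
    (hcomm : ∀ i < p ^ n, ∀ a ∈ K, x i * a = a * x i)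
    -- the inverse of `m!` in `𝔽_p`, transported to `R`
    (finv : ℕ → R) (hfinv : ∀ m : ℕ, finv m =
      ZMod.castHom (dvd_refl p) R ((m.factorial : ZMod p)⁻¹))
    -- `S` is the `K`-subalgebra of `R` generated by the elements `x^{[i]}`
    (S : Subring R)
    (hS : S = Subring.closure ((K : Set R) ∪ Set.range fun i : Fin (p ^ n) => x (i : ℕ))) :
    -- (1) `S = ⊕_{i=0}^{p^n−1} K x^{[i]}` ...
    (∀ r : R, r ∈ S ↔ ∃ c : Fin (p ^ n) → R,
        (∀ j, c j ∈ K) ∧ r = ∑ j : Fin (p ^ n), c j * x (j : ℕ)) ∧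
    (∀ c c' : Fin (p ^ n) → R, (∀ j, c j ∈ K) → (∀ j, c' j ∈ K) →
        (∑ j : Fin (p ^ n), c j * x (j : ℕ)) = ∑ j : Fin (p ^ n), c' j * x (j : ℕ) → c = c') ∧
    -- ... with `x^{[i]} = Π_k x_k^{i_k}/i_k!` for the `p`-adic digits `i_k` of `i`
    (∀ i : ℕ, 1 ≤ i → i < p ^ n →
        x i = (((List.range n).map fun k =>
          finv (i / p ^ k % p) * (x (p ^ k)) ^ (i / p ^ k % p))).prod) ∧
    -- ... and `S` is isomorphic as a `K`-algebra to `K[X_0,…,X_{n−1}]/(X_0^p,…,X_{n−1}^p)`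
    -- via `X_k ↦ x_k := x^{[p^k]}`
    (∃ e : RingQuot (fun a b : AddMonoidAlgebra K (Fin n → ℕ) =>
          ∃ k : Fin n, a = (AddMonoidAlgebra.single (Pi.single k 1) (1 : K)) ^ p ∧ b = 0) ≃+* S,
      (∀ a : K, ((e (RingQuot.mkRingHom _ (AddMonoidAlgebra.single 0 a)) : S) : R) = (a : R)) ∧
      (∀ k : Fin n, ((e (RingQuot.mkRingHom _
          (AddMonoidAlgebra.single (Pi.single k 1) (1 : K))) : S) : R) = x (p ^ (k : ℕ)))) ∧
    -- (2) if `K` is a field then the restriction of `δ` to `S` is a simple derivation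
    (IsField K →
      (∀ a ∈ S, δ a ∈ S) ∧
      ∀ I : TwoSidedIdeal S, (∀ a : S, a ∈ I → ∀ h : δ (a : R) ∈ S, (⟨δ (a : R), h⟩ : S) ∈ I) →
        I = ⊥ ∨ I = ⊤) := by
  have := Fact.mk hp
  have hKδ : ∀ a ∈ K, δ a = 0 := fun a ha => by rwa [← SetLike.mem_coe, hK] at ha
  obtain rfl : finv = invFactorial R p := funext hfinv
  subst hS
  refine ⟨fun r => hx.1.mem_closure_iff_exists_sum hx.2.1 hcomm, fun c c' hc hc' h => ?_,
    fun i _ hi => hx.1.eq_list_prod_digits hx.2.1 hi, hx.exists_ringEquiv hδ hKδ hcomm,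
    fun hKfield =>
      ⟨fun a => hx.map_mem_closure hδ hKδ, hx.eq_bot_or_eq_top hδ hK hKfield hcomm⟩⟩
  have hcc' := hx.eq_zero_of_sum_eq_zero hδ (c := c - c')
    (fun j => hKδ _ (sub_mem (hc j) (hc' j))) (by simp [sub_mul, sum_sub_distrib, h])
  exact sub_eq_zero.mp hcc'
end

section
/- (Existence of an iterative δ-descent.) Let A be a commutative algebra over a field K of characteristic p > 0 and δ a K-derivation of A such that there exist elements y_0, y_1, …, y_{n−1} ∈ A with y_k^p = 0 and δ^{p^k}(y_k) = 1 for all 0 ≤ k ≤ n−1. Then there exists an iterative δ-descent {x^{[i]} : 0 ≤ i < p^n} of exponent n in A with x^{[1]} = y_0. -/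
/-!
The descent is built one base-`p` digit at a time. Given a descent `x` of exponent `k` whose
terms `x^{[i]}`, `i ≥ 1`, have vanishing `p`-th powers, integration by parts shows that
`z = ∑_{i < p^k} (-1)^i δ^i(x^{[p^k-1]}) δ^{p^k-1-i}(y_k)` satisfies `δ z = x^{[p^k-1]}`,
because `δ^{p^k} y_k = 1` and `δ^{p^k} x^{[p^k-1]} = 0`; by Frobenius `z^p = 0`. Then
`x'^{[p^k a + r]} = (z^a / a!) x^{[r]}` (`a < p`, `r < p^k`) is a descent of exponent `k + 1`:
Lucas' theorem splits `C(i + j, i)` into the top digit and the lower part, and `δ` lowers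
`x'^{[p^k a]}` to `(z^{a-1} / (a-1)!) x^{[p^k-1]}` since `δ z = x^{[p^k-1]}`.
-/

open Nat Finset

namespace Choose

variable {p : ℕ} [Fact p.Prime]

theorem choose_modEq_choose_mod_pow_mul_choose_div_pow (k n m : ℕ) :
    n.choose m ≡ (n % p ^ k).choose (m % p ^ k) * (n / p ^ k).choose (m / p ^ k) [ZMOD p] := by
  induction k generalizing n m with
  | zero => simp [Nat.mod_one, Int.ModEq.refl]
  | succ k ih =>
    grw [ih n m, choose_modEq_choose_mod_mul_choose_div (n := n / p ^ k),
      ih (n % p ^ (k + 1)) (m % p ^ (k + 1))]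
    rw [pow_succ, Nat.mod_mul_right_mod, Nat.mod_mul_right_mod, Nat.mod_mul_right_div_self,
      Nat.mod_mul_right_div_self, Nat.div_div_eq_div_mul, Nat.div_div_eq_div_mul, mul_assoc]

theorem choose_pow_mul_add_modEq {k r s : ℕ} (hr : r < p ^ k) (hs : s < p ^ k) (a b : ℕ) :
    (p ^ k * a + r).choose (p ^ k * b + s) ≡ a.choose b * r.choose s [ZMOD p] := by
  have hpos : 0 < p ^ k := by omega
  grw [choose_modEq_choose_mod_pow_mul_choose_div_pow k]
  rw [Nat.mul_add_mod, Nat.mul_add_mod, Nat.mod_eq_of_lt hr, Nat.mod_eq_of_lt hs,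
    Nat.mul_add_div hpos, Nat.mul_add_div hpos, Nat.div_eq_of_lt hr, Nat.div_eq_of_lt hs]
  simp only [add_zero, mul_comm, Int.ModEq.refl]

end Choose

theorem Nat.exists_eq_pow_mul_add {p : ℕ} (hp : 0 < p) (k i : ℕ) :
    ∃ a r, r < p ^ k ∧ i = p ^ k * a + r :=
  ⟨i / p ^ k, i % p ^ k, Nat.mod_lt _ (by positivity), (Nat.div_add_mod i _).symm⟩

theorem Nat.pow_mul_add_lt_pow_succ_iff {p k a r : ℕ} (hr : r < p ^ k) :
    p ^ k * a + r < p ^ (k + 1) ↔ a < p := by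
  rw [pow_succ]
  constructor
  · exact fun h => Nat.lt_of_mul_lt_mul_left (lt_of_le_of_lt (Nat.le_add_right _ _) h)
  · intro ha
    calc p ^ k * a + r < p ^ k * (a + 1) := by rw [mul_add_one]; omega
      _ ≤ p ^ k * p := Nat.mul_le_mul_left _ ha

theorem Derivation.map_sum_neg_one_pow_mul_iterate {R A : Type*} [CommRing R] [CommRing A]
    [Algebra R A] (D : Derivation R A A) (w y : A) (N : ℕ) :
    D (∑ i ∈ range N, (-1) ^ i * (D^[i] w * D^[N - 1 - i] y)) =
      w * D^[N] y - (-1) ^ N * (D^[N] w * y) := by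
  set F : ℕ → A := fun i => (-1) ^ i * (D^[i] w * D^[N - i] y)
  have hterm : ∀ i ∈ range N, D ((-1) ^ i * (D^[i] w * D^[N - 1 - i] y)) = F i - F (i + 1) := by
    intro i hi
    have hNi : N - i = N - 1 - i + 1 := by have := mem_range.1 hi; omega
    have hneg : D ((-1 : A) ^ i) = 0 := by simp
    simp only [F, Derivation.leibniz, hneg, smul_eq_mul, hNi, Function.iterate_succ_apply',
      show N - (i + 1) = N - 1 - i by omega, pow_succ]
    ring
  rw [map_sum, sum_congr rfl hterm, sum_range_sub']
  simp [F]

def IsDerivation.toDerivation {K A : Type*} [CommRing K] [CommRing A] [Algebra K A] {δ : A → A}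
    (hδ : IsDerivation δ) (hδK : ∀ c : K, δ (algebraMap K A c) = 0) : Derivation K A A :=
  Derivation.mk'
    { toFun := δ
      map_add' := hδ.1
      map_smul' := fun c a => by simp [Algebra.smul_def, hδ.2, hδK] }
    (fun a b => by simp [hδ.2, add_comm, mul_comm])

theorem IsDerivation.coe_toDerivation {K A : Type*} [CommRing K] [CommRing A] [Algebra K A]
    {δ : A → A} (hδ : IsDerivation δ) (hδK : ∀ c : K, δ (algebraMap K A c) = 0) :
    ⇑(hδ.toDerivation hδK) = δ :=
  rfl

section IterativeSeq

variable {A : Type*} [CommRing A] {p : ℕ}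

def stackSeq (p k : ℕ) (w x : ℕ → A) (i : ℕ) : A := w (i / p ^ k) * x (i % p ^ k)

theorem stackSeq_pow_mul_add (w x : ℕ → A) {k r : ℕ} (hr : r < p ^ k) (a : ℕ) :
    stackSeq p k w x (p ^ k * a + r) = w a * x r := by
  have hpos : 0 < p ^ k := by omega
  rw [stackSeq, Nat.mul_add_div hpos, Nat.div_eq_of_lt hr, add_zero, Nat.mul_add_mod,
    Nat.mod_eq_of_lt hr]

theorem IsIterativeSeq.mul_eq_zero_of_pow_le {k : ℕ} {x : ℕ → A} (hx : IsIterativeSeq p k x)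
    {i j : ℕ} (hi : i < p ^ k) (hj : j < p ^ k) (hij : p ^ k ≤ i + j) : x i * x j = 0 := by
  rw [hx.2 i hi j hj, hx.1 _ hij, mul_zero]

theorem IsIterativeDescent.iterate_apply {k : ℕ} {δ : A → A} {x : ℕ → A}
    (hx : IsIterativeDescent p k δ x) {i t : ℕ}
    (hi : i < p ^ k) (ht : t ≤ i) : δ^[t] (x i) = x (i - t) := by
  induction t with
  | zero => rfl
  | succ t ih =>
    rw [Function.iterate_succ_apply', ih (by omega), hx.2.2 _ (by omega) (by omega)]
    rfl

theorem isIterativeDescent_pi_single_zero (p : ℕ) (δ : A → A) :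
    IsIterativeDescent p 0 δ (Pi.single 0 1) := by
  refine ⟨⟨fun k hk => Pi.single_eq_of_ne (by simp_all; omega) _, fun i hi j hj => ?_⟩, rfl,
    fun i hi1 hi => by simp at hi; omega⟩
  obtain ⟨rfl, rfl⟩ : i = 0 ∧ j = 0 := by simp_all
  simp

variable [Fact p.Prime] [CharP A p]

theorem Nat.cast_choose_pow_mul_add {k r s : ℕ} (hr : r < p ^ k) (hs : s < p ^ k) (a b : ℕ) :
    (((p ^ k * a + r).choose (p ^ k * b + s) : ℕ) : A) = a.choose b * r.choose s := by
  exact_mod_cast (CharP.intCast_eq_intCast A p).2 (Choose.choose_pow_mul_add_modEq hr hs a b)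

theorem IsIterativeSeq.stackSeq {k : ℕ} {w x : ℕ → A} (hw : IsIterativeSeq p 1 w)
    (hx : IsIterativeSeq p k x) : IsIterativeSeq p (k + 1) (stackSeq p k w x) := by
  have hp : 0 < p := (Fact.out : p.Prime).pos
  constructor
  · intro i hi
    obtain ⟨a, r, hr, rfl⟩ := Nat.exists_eq_pow_mul_add hp k i
    rw [stackSeq_pow_mul_add w x hr, hw.1 a ?_, zero_mul]
    simpa using (Nat.pow_mul_add_lt_pow_succ_iff hr).not.1 hi.not_gt
  · intro i hi j hj
    obtain ⟨a, r, hr, rfl⟩ := Nat.exists_eq_pow_mul_add hp k i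
    obtain ⟨b, s, hs, rfl⟩ := Nat.exists_eq_pow_mul_add hp k j
    rw [stackSeq_pow_mul_add w x hr, stackSeq_pow_mul_add w x hs,
      mul_mul_mul_comm, hw.2 a (by simpa [Nat.pow_mul_add_lt_pow_succ_iff hr] using hi) b
        (by simpa [Nat.pow_mul_add_lt_pow_succ_iff hs] using hj), hx.2 r hr s hs]
    rcases lt_or_ge (r + s) (p ^ k) with hrs | hrs
    · have hsum : p ^ k * a + r + (p ^ k * b + s) = p ^ k * (a + b) + (r + s) := by ring
      rw [hsum, stackSeq_pow_mul_add w x hrs, Nat.cast_choose_pow_mul_add hrs hr]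
      ring
    · -- a carry out of the lower digits makes the binomial coefficient vanish mod `p`
      have hsum : p ^ k * a + r + (p ^ k * b + s) = p ^ k * (a + b + 1) + (r + s - p ^ k) := by
        zify [hrs]; ring
      rw [hx.1 _ hrs, hsum, Nat.cast_choose_pow_mul_add (by omega) hr,
        Nat.choose_eq_zero_of_lt (by omega : r + s - p ^ k < r)]
      simp

end IterativeSeq

section IterativeDescent

variable {R A : Type*} [CommRing R] [CommRing A] [Algebra R A] {p k : ℕ} [Fact p.Prime]
  [CharP A p] {D : Derivation R A A} {x : ℕ → A}

theorem IsIterativeDescent.exists_antiderivative_last (hx : IsIterativeDescent p k D x)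
    (hxp : ∀ i, 1 ≤ i → x i ^ p = 0) {y : A} (hy : y ^ p = 0) (hyD : D^[p ^ k] y = 1) :
    ∃ z, z ^ p = 0 ∧ D z = x (p ^ k - 1) ∧ (k = 0 → z = y) := by
  have hpk : 0 < p ^ k := by have := (Fact.out : p.Prime).pos; positivity
  set N := p ^ k
  set W := x (N - 1)
  have hW : ∀ i < N, D^[i] W = x (N - 1 - i) := fun i hi => hx.iterate_apply (by omega) (by omega)
  have hWN : D^[N] W = 0 := by
    rw [show N = N - 1 + 1 by omega, Function.iterate_succ_apply', hW _ (by omega),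
      Nat.sub_self, hx.2.1, D.map_one_eq_zero]
  refine ⟨∑ i ∈ range N, (-1) ^ i * (D^[i] W * D^[N - 1 - i] y), ?_, ?_, ?_⟩
  · rw [sum_pow_char]
    refine sum_eq_zero fun i hi => ?_
    rw [mul_pow, mul_pow]
    rcases lt_or_ge i (N - 1) with hlt | hge
    · rw [hW i (by omega), hxp _ (by omega)]
      ring
    · rw [show N - 1 - i = 0 by omega, Function.iterate_zero_apply, hy]
      ring
  · rw [D.map_sum_neg_one_pow_mul_iterate, hyD, hWN]
    ring
  · intro hk
    simp [N, W, hk, hx.2.1]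

end IterativeDescent

section DividedPow

variable (K : Type*) {A : Type*} [Field K] [CommRing A] [Algebra K A]

/-- `z ^ a / a!`; since `(a ! : K)⁻¹ = 0` for `a ≥ p`, it vanishes from `a = p` on. -/
noncomputable def dividedPow (z : A) (a : ℕ) : A := (a ! : K)⁻¹ • z ^ a

variable {K} {p : ℕ}

theorem dividedPow_zero (z : A) : dividedPow K z 0 = 1 := by simp [dividedPow]

theorem dividedPow_one (z : A) : dividedPow K z 1 = z := by simp [dividedPow]

theorem dividedPow_pow_eq_zero {z : A} (hz : z ^ p = 0) {a : ℕ} (ha : 1 ≤ a) :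
    dividedPow K z a ^ p = 0 := by
  rw [dividedPow, smul_pow, ← pow_mul, pow_eq_zero_of_le (by nlinarith) hz, smul_zero]

theorem stackSeq_dividedPow_pow_eq_zero {k : ℕ} {x : ℕ → A} (hxp : ∀ i, 1 ≤ i → x i ^ p = 0)
    {z : A} (hz : z ^ p = 0) {i : ℕ} (hi : 1 ≤ i) :
    stackSeq p k (dividedPow K z) x i ^ p = 0 := by
  rw [stackSeq, mul_pow]
  rcases Nat.eq_zero_or_pos (i % p ^ k) with hr | hr
  · have : i / p ^ k ≠ 0 := fun h => by
      have := Nat.div_add_mod i (p ^ k)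
      rw [h, hr] at this
      omega
    rw [dividedPow_pow_eq_zero hz (Nat.pos_of_ne_zero this), zero_mul]
  · rw [hxp _ hr, mul_zero]

variable [Fact p.Prime] [CharP K p]

theorem CharP.natCast_factorial_eq_zero_iff (a : ℕ) : (a ! : K) = 0 ↔ p ≤ a := by
  rw [CharP.cast_eq_zero_iff K p, (Fact.out : p.Prime).dvd_factorial]

theorem dividedPow_mul_dividedPow {z : A} (hz : z ^ p = 0) (a b : ℕ) :
    dividedPow K z a * dividedPow K z b = ((a + b).choose a : A) * dividedPow K z (a + b) := by
  rcases lt_or_ge (a + b) p with hab | hab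
  · have hfac : ∀ m ≤ a + b, (m ! : K) ≠ 0 := fun m hm =>
      (CharP.natCast_factorial_eq_zero_iff m).not.2 (by omega)
    have key : (a ! : K)⁻¹ * (b ! : K)⁻¹ = ((a + b).choose a : K) * ((a + b) ! : K)⁻¹ := by
      rw [eq_mul_inv_iff_mul_eq₀ (hfac _ le_rfl), Nat.choose_symm_add,
        ← Nat.add_choose_mul_factorial_mul_factorial a b]
      push_cast
      field_simp [hfac a (by omega), hfac b (by omega)]
    simp only [dividedPow, smul_mul_smul_comm, ← pow_add, key, mul_smul, Nat.cast_smul_eq_nsmul,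
      nsmul_eq_mul]
  · have hzab : z ^ (a + b) = 0 := pow_eq_zero_of_le hab hz
    simp [dividedPow, ← pow_add, hzab]

theorem isIterativeSeq_dividedPow {z : A} (hz : z ^ p = 0) : IsIterativeSeq p 1 (dividedPow K z) :=
  ⟨fun a ha => by simp [dividedPow, (CharP.natCast_factorial_eq_zero_iff a).2 (by simpa using ha)],
    fun a _ b _ => dividedPow_mul_dividedPow hz a b⟩

theorem Derivation.map_dividedPow (D : Derivation K A A) (z : A) {a : ℕ} (ha : 1 ≤ a)
    (hap : a < p) : D (dividedPow K z a) = dividedPow K z (a - 1) * D z := by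
  have hfac : ((a - 1) ! : K) ≠ 0 := (CharP.natCast_factorial_eq_zero_iff _).not.2 (by omega)
  have key : (a ! : K)⁻¹ * a = ((a - 1) ! : K)⁻¹ := by
    rw [← Nat.mul_factorial_pred (by omega : a ≠ 0)]
    have : (a : K) ≠ 0 := by
      rw [Ne, CharP.cast_eq_zero_iff K p]
      exact fun h => by have := Nat.le_of_dvd (by omega) h; omega
    push_cast
    field_simp
  simp only [dividedPow, D.map_smul, D.leibniz_pow, smul_eq_mul, ← Nat.cast_smul_eq_nsmul K,
    smul_smul, key, smul_mul_assoc]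

end DividedPow

section Existence

variable {K A : Type*} [Field K] [CommRing A] [Algebra K A] {p : ℕ} [Fact p.Prime] [CharP K p]
  [CharP A p] {D : Derivation K A A}

theorem IsIterativeDescent.stackSeq_dividedPow {k : ℕ} {x : ℕ → A} {z : A}
    (hx : IsIterativeDescent p k D x) (hz : z ^ p = 0) (hDz : D z = x (p ^ k - 1)) :
    IsIterativeDescent p (k + 1) D (stackSeq p k (dividedPow K z) x) := by
  have hpk : 0 < p ^ k := by have := (Fact.out : p.Prime).pos; positivity
  refine ⟨(isIterativeSeq_dividedPow hz).stackSeq hx.1, ?_, fun i hi1 hi => ?_⟩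
  · simp [stackSeq, dividedPow_zero, hx.2.1]
  obtain ⟨a, r, hr, rfl⟩ := Nat.exists_eq_pow_mul_add (Fact.out : p.Prime).pos k i
  have hap : a < p := (Nat.pow_mul_add_lt_pow_succ_iff hr).1 hi
  rcases Nat.eq_zero_or_pos r with rfl | hr0
  · obtain ⟨a, rfl⟩ : ∃ b, a = b + 1 := Nat.exists_eq_add_one.2 (by nlinarith)
    rw [show p ^ k * (a + 1) + 0 - 1 = p ^ k * a + (p ^ k - 1) by rw [mul_add_one]; omega,
      stackSeq_pow_mul_add _ _ hr, stackSeq_pow_mul_add _ _ (by omega), hx.2.1, mul_one,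
      D.map_dividedPow z (by omega) hap, hDz, Nat.add_sub_cancel]
  · have hDxw : x r * D (dividedPow K z a) = 0 := by
      rcases Nat.eq_zero_or_pos a with rfl | ha
      · rw [dividedPow_zero, D.map_one_eq_zero, mul_zero]
      · rw [D.map_dividedPow z ha hap, hDz, mul_left_comm,
          hx.1.mul_eq_zero_of_pow_le hr (by omega) (by omega), mul_zero]
    rw [show p ^ k * a + r - 1 = p ^ k * a + (r - 1) by omega, stackSeq_pow_mul_add _ _ hr,
      stackSeq_pow_mul_add _ _ (by omega), D.leibniz, smul_eq_mul, smul_eq_mul, hDxw, add_zero,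
      hx.2.2 r hr0 hr]

theorem exists_isIterativeDescent (n : ℕ) (y : Fin n → A) (hyp : ∀ k, y k ^ p = 0)
    (hyD : ∀ k : Fin n, D^[p ^ (k : ℕ)] (y k) = 1) :
    ∃ x : ℕ → A, IsIterativeDescent p n D x ∧ (∀ i, 1 ≤ i → x i ^ p = 0) ∧
      ∀ h0 : 0 < n, x 1 = y ⟨0, h0⟩ := by
  induction n with
  | zero =>
    refine ⟨Pi.single 0 1, isIterativeDescent_pi_single_zero p _, fun i hi => ?_,
      fun h => (lt_irrefl 0 h).elim⟩
    rw [Pi.single_eq_of_ne (by omega), zero_pow (Fact.out : p.Prime).ne_zero]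
  | succ n ih =>
    obtain ⟨x, hx, hxp, hx1⟩ := ih (y ∘ Fin.castSucc) (fun k => hyp k.castSucc)
      (fun k => hyD k.castSucc)
    obtain ⟨z, hz, hDz, hzy⟩ := hx.exists_antiderivative_last hxp (hyp (Fin.last n))
      (by simpa using hyD (Fin.last n))
    refine ⟨stackSeq p n (dividedPow K z) x, hx.stackSeq_dividedPow hz hDz,
      fun i hi => stackSeq_dividedPow_pow_eq_zero hxp hz hi, fun _ => ?_⟩
    rcases Nat.eq_zero_or_pos n with rfl | hn
    · simpa [stackSeq, dividedPow_one, hx.2.1] using hzy rfl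
    · have h1 : 1 < p ^ n := Nat.one_lt_pow hn.ne' (Fact.out : p.Prime).one_lt
      simpa [dividedPow_zero, hx1 hn] using stackSeq_pow_mul_add (dividedPow K z) x h1 0

end Existence

/-- Existence of an iterative `δ`-descent. -/
theorem stmt15 {K A : Type*} [Field K] [CommRing A] [Algebra K A]
    (p : ℕ) (hp : p.Prime) [CharP K p]
    (δ : A → A) (hδ : IsDerivation δ) (hδK : ∀ c : K, δ (algebraMap K A c) = 0)
    (n : ℕ) (y : Fin n → A)
    (hyp : ∀ k : Fin n, (y k) ^ p = 0)
    (hyd : ∀ k : Fin n, δ^[p ^ (k : ℕ)] (y k) = 1) :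
    ∃ x : ℕ → A, IsIterativeDescent p n δ x ∧
      ∀ h0 : 0 < n, x 1 = y ⟨0, h0⟩ := by
  rcases subsingleton_or_nontrivial A with hA | hA
  · exact ⟨0, ⟨⟨fun _ _ => Subsingleton.elim _ _, fun _ _ _ _ => Subsingleton.elim _ _⟩,
      Subsingleton.elim _ _, fun _ _ _ => Subsingleton.elim _ _⟩, fun _ => Subsingleton.elim _ _⟩
  have : Fact p.Prime := ⟨hp⟩
  have : CharP A p := charP_of_injective_algebraMap (algebraMap K A).injective p
  rw [← hδ.coe_toDerivation hδK] at hyd ⊢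
  obtain ⟨x, hx, -, hx1⟩ := exists_isIterativeDescent n y hyp hyd
  exact ⟨x, hx, hx1⟩
end
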